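/- There exists a unique x₀ ∈ (0, 4/5) such that r(x₀) = (π/2)^2, where r(x) = x^2(2-x)/(4(1-x)^2(4-5x)). -/

import Mathlib

open Set Real

private noncomputable def cc : ℝ := (Real.pi / 2)^2

private lemma cc_bounds : 2 ≤ cc ∧ cc ≤ 3 := by
  have h1 := Real.pi_gt_d6
  have h2 := Real.pi_lt_d2
  constructor <;> (unfold cc; nlinarith)

private noncomputable def ff (x : ℝ) : ℝ :=
  (20*cc-1)*x^3 + (2-56*cc)*x^2 + 52*cc*x - 16*cc

private lemma ff_deriv (x : ℝ) :
    HasDerivAt ff (3*(20*cc-1)*x^2 + 2*(2-56*cc)*x + 52*cc) x := by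
  have h1 := (hasDerivAt_pow 3 x).const_mul (20*cc-1)
  have h2 := (hasDerivAt_pow 2 x).const_mul (2-56*cc)
  have h3 := (hasDerivAt_id x).const_mul (52*cc)
  have h := ((h1.add h2).add h3).sub_const (16*cc)
  convert h using 1
  · rfl
  · rfl
  · funext y; simp only [ff, Pi.add_apply, id]
  push_cast
  ring

private lemma dpos (x : ℝ) :
    0 < 3*(20*cc-1)*x^2 + 2*(2-56*cc)*x + 52*cc := by
  obtain ⟨h2, h3⟩ := cc_bounds
  nlinarith [sq_nonneg (6*(20*cc-1)*x + 2*(2-56*cc)), sq_nonneg x,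
    mul_nonneg (sub_nonneg.2 h2) (sub_nonneg.2 h3)]

private lemma ff_mono : StrictMono ff := by
  apply strictMono_of_deriv_pos
  intro x
  rw [(ff_deriv x).deriv]
  exact dpos x

private lemma key_iff (x : ℝ) (hx : x ∈ Set.Ioo (0:ℝ) (4/5)) :
    (x^2 * (2 - x) / (4 * (1 - x)^2 * (4 - 5*x)) = (Real.pi / 2)^2) ↔ ff x = 0 := by
  obtain ⟨hx0, hx1⟩ := hx
  have h1 : (1 - x) ≠ 0 := by intro h; nlinarith
  have h2 : (4 - 5*x) > 0 := by linarith
  have hden : 4 * (1 - x)^2 * (4 - 5*x) ≠ 0 := by positivity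
  rw [div_eq_iff hden]
  unfold ff cc
  constructor <;> intro h <;> nlinarith [h]

/-- There exists a unique `x₀ ∈ (0, 4/5)` such that `r(x₀) = (π/2)²`, where
`r(x) = x²(2-x)/(4(1-x)²(4-5x))`. -/
theorem exists_unique_x0 :
    ∃! x₀ : ℝ, x₀ ∈ Set.Ioo (0:ℝ) (4/5) ∧
      x₀^2 * (2 - x₀) / (4 * (1 - x₀)^2 * (4 - 5*x₀)) = (Real.pi / 2)^2 := by
  obtain ⟨h2, h3⟩ := cc_bounds
  have hf0 : ff 0 < 0 := by unfold ff; nlinarith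
  have hf1 : ff (4/5) > 0 := by unfold ff; nlinarith
  have hcont : ContinuousOn ff (Set.Icc (0:ℝ) (4/5)) := by
    apply Continuous.continuousOn; unfold ff; continuity
  have hsub := intermediate_value_Ioo (by norm_num : (0:ℝ) ≤ 4/5) hcont
  have h0mem : (0:ℝ) ∈ Set.Ioo (ff 0) (ff (4/5)) := ⟨hf0, hf1⟩
  obtain ⟨x₀, hx₀, hfx₀⟩ := hsub h0mem
  refine ⟨x₀, ⟨hx₀, (key_iff x₀ hx₀).2 hfx₀⟩, ?_⟩
  rintro y ⟨hy, hey⟩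
  have hfy : ff y = 0 := (key_iff y hy).1 hey
  exact ff_mono.injective (by rw [hfy, hfx₀])
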